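/- The reduced pointed Σ-labelled rooted trees other than the trivial tree are closed under pointed tree concatenation ∘ and the domain operation D, and form the free algebra over Σ for the class of {∘, D}-algebras of binary relations: for every set X, every set A of binary relations on X closed under relation composition and the domain operation, and every map g from Σ to A, there is a unique map h from the nontrivial reduced pointed Σ-labelled rooted trees to A such that h(→a) = g(a) for all a ∈ Σ, h(T∘S) = h(T) composed with h(S), and h(D(T)) = domain of h(T). -/

import Mathlib

inductive PreTree (α : Type) : Type
  | node : Bool → List (α × PreTree α) → PreTree α

namespace PreTree

variable {α : Type}

def mark : PreTree α → Bool
  | node b _ => b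

def children : PreTree α → List (α × PreTree α)
  | node _ cs => cs

def le : PreTree α → PreTree α → Prop
  | node b₁ c₁, node b₂ c₂ =>
      (b₂ = true → b₁ = true) ∧
      ∀ q, q ∈ c₂ → ∃ p, p ∈ c₁ ∧ p.1 = q.1 ∧ le p.2 q.2
termination_by _ t₂ => sizeOf t₂
decreasing_by
  have h := List.sizeOf_lt_of_mem ‹q ∈ c₂›
  obtain ⟨qa, qt⟩ := q
  simp at h ⊢
  omega

-- The reduced form of a tree: reduce all child subtrees, then for each
-- label keep only the `≤`-minimal attached subtrees.
open scoped Classical in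
noncomputable def reduce : PreTree α → PreTree α
  | node b cs =>
      let cs' : List (α × PreTree α) := cs.attach.map fun p => (p.1.1, reduce p.1.2)
      node b (cs'.filter fun q =>
        decide (∀ q' ∈ cs', q'.1 = q.1 → le q'.2 q.2 → le q.2 q'.2))
termination_by t => sizeOf t
decreasing_by
  have h := List.sizeOf_lt_of_mem p.2
  obtain ⟨⟨pa, pt⟩, hp⟩ := p
  simp at h ⊢
  omega

/-- A tree is reduced if it equals its reduced form. -/
def Reduced (T : PreTree α) : Prop := reduce T = T

/-- The number of marked (point) vertices of a tree. -/
def markCount : PreTree α → ℕ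
  | node b cs => (cond b 1 0) + (cs.attach.map fun p => markCount p.1.2).sum
termination_by t => sizeOf t
decreasing_by
  have h := List.sizeOf_lt_of_mem p.2
  obtain ⟨⟨pa, pt⟩, hp⟩ := p
  simp at h ⊢
  omega

/-- A pointed tree: exactly one vertex is marked as the point. -/
def Pointed (T : PreTree α) : Prop := markCount T = 1

/-- Remove all point marks. -/
def unmark : PreTree α → PreTree α
  | node _ cs => node false (cs.attach.map fun p => (p.1.1, unmark p.1.2))
termination_by t => sizeOf t
decreasing_by
  have h := List.sizeOf_lt_of_mem p.2
  obtain ⟨⟨pa, pt⟩, hp⟩ := p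
  simp at h ⊢
  omega

/-- Graft the tree `S` onto the point of `T` (identifying the point of `T`
with the root of `S`); the marks of `S` determine the new point. -/
def graft (S : PreTree α) : PreTree α → PreTree α
  | node b cs =>
      if b then node S.mark (cs ++ S.children)
      else node b (cs.attach.map fun p => (p.1.1, graft S p.1.2))
termination_by t => sizeOf t
decreasing_by
  have h := List.sizeOf_lt_of_mem p.2
  obtain ⟨⟨pa, pt⟩, hp⟩ := p
  simp at h ⊢
  omega

/-- Move the point of `T` to its root. -/
def pointAtRoot (T : PreTree α) : PreTree α := node true (unmark T).children

/-- Pointed tree concatenation `T ∘ S`. -/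
noncomputable def concat (T S : PreTree α) : PreTree α := reduce (graft S T)

/-- The domain operation `D(T)` on pointed trees. -/
noncomputable def domTree (T : PreTree α) : PreTree α := reduce (pointAtRoot T)

/-- The trivial pointed tree: one vertex, both root and point. -/
def trivialTree : PreTree α := node true []

/-- The two-vertex pointed tree with a single `a`-labelled edge, point at the child. -/
def arrow (a : α) : PreTree α := node false [(a, node true [])]


/-- Set-theoretic equality of trees (children lists regarded as sets). -/
def eqv : PreTree α → PreTree α → Prop
  | node b₁ c₁, node b₂ c₂ =>
      b₁ = b₂ ∧
      (∀ p, p ∈ c₁ → ∃ q, q ∈ c₂ ∧ p.1 = q.1 ∧ eqv p.2 q.2) ∧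
      (∀ q, q ∈ c₂ → ∃ p : {x // x ∈ c₁}, p.1.1 = q.1 ∧ eqv p.1.2 q.2)
termination_by t₁ _ => sizeOf t₁
decreasing_by
  · have h₁ := List.sizeOf_lt_of_mem ‹p ∈ c₁›
    obtain ⟨pa, pt⟩ := p
    simp at h₁ ⊢
    omega
  · have h₁ := List.sizeOf_lt_of_mem p.2
    obtain ⟨⟨pa, pt⟩, hp⟩ := p
    simp at h₁ ⊢
    omega


/-- The subtree of `T` at position `p` (a list of child indices), if it exists. -/
def subAt : List ℕ → PreTree α → Option (PreTree α)
  | [], t => some t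
  | i :: is, node _ cs => (cs[i]?).bind fun p => subAt is p.2

/-- `p` is a vertex of `T`. -/
def IsVertex (T : PreTree α) (p : List ℕ) : Prop := ∃ t, subAt p T = some t

/-- The vertex `p` of `T` is the point (is marked). -/
def IsPoint (T : PreTree α) (p : List ℕ) : Prop :=
  ∃ t, subAt p T = some t ∧ t.mark = true

/-- There is an `a`-labelled edge of `T` from vertex `p` (the parent) to
vertex `q` (the child). -/
def Edge (T : PreTree α) (a : α) (p q : List ℕ) : Prop :=
  ∃ c, subAt p T = some c ∧ ∃ i t, c.children[i]? = some (a, t) ∧ q = p ++ [i]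

theorem root_isVertex (T : PreTree α) : IsVertex T [] := ⟨T, rfl⟩

/-- A homomorphism of pointed labelled rooted trees from `S` to `T`:
a map of vertices preserving the labelled edge relations, sending the root
to the root and points to points. -/
def HomTree (S T : PreTree α) : Prop :=
  ∃ θ : List ℕ → List ℕ,
    θ [] = [] ∧
    (∀ p, IsVertex S p → IsVertex T (θ p)) ∧
    (∀ a p q, Edge S a p q → Edge T a (θ p) (θ q)) ∧
    (∀ p, IsPoint S p → IsPoint T (θ p))

/-- A homomorphism of the pointed tree `T`, viewed as a relational structure,
into the relational structure `(X, f)`, mapping the root of `T` to `x` and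
the point of `T` to `y`. -/
def HomInto {X : Type} (T : PreTree α) (f : α → X → X → Prop) (x y : X) : Prop :=
  ∃ θ : List ℕ → X,
    θ [] = x ∧
    (∀ a p q, Edge T a p q → f a (θ p) (θ q)) ∧
    (∀ p, IsPoint T p → θ p = y)


end PreTree

namespace FreeKAD

/-- Terms of the signature `{∘, 1, D}`. -/
inductive Term1 (α : Type) : Type
  | var : α → Term1 α
  | one : Term1 α
  | comp : Term1 α → Term1 α → Term1 α
  | dom : Term1 α → Term1 α

/-- Terms of the signature `{∘, +, *, 0, 1, D}` (Kleene algebra with domain). -/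
inductive TermK (α : Type) : Type
  | var : α → TermK α
  | zero : TermK α
  | one : TermK α
  | comp : TermK α → TermK α → TermK α
  | add : TermK α → TermK α → TermK α
  | star : TermK α → TermK α
  | dom : TermK α → TermK α

variable {α : Type}

/-- The relational interpretation of a `{∘, 1, D}`-term over a set `X`,
under an assignment `f` of binary relations on `X` to the variables. -/
def rinterp1 {X : Type} (f : α → X → X → Prop) : Term1 α → X → X → Prop
  | .var a => f a
  | .one => fun x y => x = y
  | .comp s t => fun x y => ∃ z, rinterp1 f s x z ∧ rinterp1 f t z y
  | .dom s => fun x y => x = y ∧ ∃ z, rinterp1 f s x z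

/-- The relational interpretation of a `{∘, +, *, 0, 1, D}`-term over a set `X`,
under an assignment `f` of binary relations on `X` to the variables. -/
def rinterpK {X : Type} (f : α → X → X → Prop) : TermK α → X → X → Prop
  | .var a => f a
  | .zero => fun _ _ => False
  | .one => fun x y => x = y
  | .comp s t => fun x y => ∃ z, rinterpK f s x z ∧ rinterpK f t z y
  | .add s t => fun x y => rinterpK f s x y ∨ rinterpK f t x y
  | .star s => Relation.ReflTransGen (rinterpK f s)
  | .dom s => fun x y => x = y ∧ ∃ z, rinterpK f s x z

/-- Composition of binary relations. -/
def relComp {X : Type} (R S : X → X → Prop) : X → X → Prop :=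
  fun x y => ∃ z, R x z ∧ S z y

/-- Union of binary relations. -/
def relUnion {X : Type} (R S : X → X → Prop) : X → X → Prop :=
  fun x y => R x y ∨ S x y

/-- The domain operation on binary relations. -/
def relDom {X : Type} (R : X → X → Prop) : X → X → Prop :=
  fun x y => x = y ∧ ∃ z, R x z

/-- The identity relation. -/
def relId {X : Type} : X → X → Prop := fun x y => x = y

/-- The empty relation. -/
def relEmpty {X : Type} : X → X → Prop := fun _ _ => False

end FreeKAD

namespace FreeKAD

open PreTree

variable {α : Type}

/-- The single-tree interpretation of `{∘, 1, D}`-terms. -/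
noncomputable def interp1 : Term1 α → PreTree α
  | .var a => arrow a
  | .one => trivialTree
  | .comp s t => concat (interp1 s) (interp1 t)
  | .dom s => domTree (interp1 s)

/-- The set of `≤`-maximal elements of a set of trees. -/
def maximalSet (K : Set (PreTree α)) : Set (PreTree α) :=
  {T | T ∈ K ∧ ∀ S ∈ K, le T S → le S T}

/-- Elementwise lifting of pointed tree concatenation to sets of trees. -/
def liftComp (K L : Set (PreTree α)) : Set (PreTree α) :=
  {U | ∃ T ∈ K, ∃ S ∈ L, U = concat T S}

/-- Elementwise lifting of the domain operation to sets of trees. -/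
def liftDom (K : Set (PreTree α)) : Set (PreTree α) :=
  {U | ∃ T ∈ K, U = domTree T}

/-- Iterated lifted concatenation: `K^0 = {trivial}`, `K^(i+1) = K^i ∘ K`. -/
def powC (K : Set (PreTree α)) : ℕ → Set (PreTree α)
  | 0 => {trivialTree}
  | i + 1 => liftComp (powC K i) K

/-- The standard tree interpretation of `{∘, +, *, 0, 1, D}`-terms. -/
def sinterp : TermK α → Set (PreTree α)
  | .var a => {arrow a}
  | .zero => ∅
  | .one => {trivialTree}
  | .comp s t => maximalSet (liftComp (sinterp s) (sinterp t))
  | .add s t => maximalSet (sinterp s ∪ sinterp t)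
  | .star s => maximalSet (⋃ i : ℕ, powC (sinterp s) (i + 1))
  | .dom s => maximalSet (liftDom (sinterp s))

/-- Equality of sets of trees, with trees compared as (hereditarily finite) sets. -/
def SetEqv (K L : Set (PreTree α)) : Prop :=
  (∀ T ∈ K, ∃ S ∈ L, eqv T S) ∧ (∀ S ∈ L, ∃ T ∈ K, eqv T S)

/-- A set of reduced pointed trees is regular if it is the standard tree
interpretation of some `{∘, +, *, 0, 1, D}`-term. -/
def Regular (L : Set (PreTree α)) : Prop := ∃ t : TermK α, L = sinterp t

/-- The set of reduced trees lying `≤`-below some member of `L`. -/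
def down (L : Set (PreTree α)) : Set (PreTree α) :=
  {T | Reduced T ∧ ∃ S ∈ L, le T S}

end FreeKAD

namespace FreeKAD
open PreTree

/-- Nontrivial reduced pointed `Σ`-labelled rooted trees. -/
def NRPTree (α : Type) : Type :=
  {T : PreTree α // T.Reduced ∧ T.Pointed ∧ ¬ eqv T trivialTree}

end FreeKAD

/-!
A pointed tree `T` and an assignment `g` of relations to labels define the relation
`HomInto T g`: `x` is related to `y` when `T` maps homomorphically into `(X, g)` with root `x`
and point `y`. Grafting composes these relations, moving the point to the root takes their
domain, and neither reduction nor `eqv` changes them, since `S ≤ T` means that `T` maps into `S`.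
So `T ↦ HomInto T g` is the required homomorphism. It lands in `A` and is unique because every
nontrivial reduced pointed tree is, up to `eqv`, an arrow or is obtained by `∘` or `D` from
lighter such trees: split off an unmarked child of the root, peel off the edge above the point,
or, when the root is the point and has a single child, move the point down to that child.
-/
theorem List.exists_eq_one_of_sum_map_eq_one {β : Type*} {f : β → ℕ} :
    ∀ {l : List β}, (l.map f).sum = 1 → ∃ c ∈ l, f c = 1 ∧ ∀ d ∈ l, f d = 0 ∨ d = c
  | [], h => by simp at h
  | a :: l, h => by
    rw [List.map_cons, List.sum_cons] at h
    obtain ha | ha : f a = 0 ∨ f a = 1 := by omega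
    · obtain ⟨c, hc, hc1, hd⟩ := List.exists_eq_one_of_sum_map_eq_one (f := f) (l := l) (by omega)
      refine ⟨c, .tail a hc, hc1, ?_⟩
      simpa [ha] using hd
    · have hl : ∀ d ∈ l, f d = 0 := by
        simpa [List.sum_eq_zero_iff] using (show (l.map f).sum = 0 by omega)
      refine ⟨a, .head l, ha, fun d hd => ?_⟩
      rcases List.mem_cons.1 hd with rfl | hd
      exacts [.inr rfl, .inl (hl d hd)]

theorem List.map_eq_self_of_forall_mem {β : Type*} {f : β → β} {l : List β}
    (h : ∀ a ∈ l, f a = a) : l.map f = l :=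
  (List.map_congr_left h).trans (List.map_id l)

namespace PreTree

variable {α : Type} {X : Type}

section Basic

theorem sizeOf_lt_of_mem_children {b : Bool} {cs : List (α × PreTree α)} {c : α × PreTree α}
    (h : c ∈ cs) : sizeOf c.2 < sizeOf (node b cs) := by
  have := List.sizeOf_lt_of_mem h
  obtain ⟨a, t⟩ := c
  simp at this ⊢
  omega

@[elab_as_elim]
theorem induction_on {motive : PreTree α → Prop} (T : PreTree α)
    (node : ∀ b cs, (∀ c ∈ cs, motive c.2) → motive (node b cs)) : motive T := by
  induction h : sizeOf T using Nat.strong_induction_on generalizing T with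
  | _ n ih =>
    obtain ⟨b, cs⟩ := T
    exact node b cs fun c hc => ih _ (h ▸ sizeOf_lt_of_mem_children hc) _ rfl

theorem markCount_node (b : Bool) (cs : List (α × PreTree α)) :
    markCount (node b cs) = b.toNat + (cs.map fun c => markCount c.2).sum := by
  rw [markCount]
  exact congrArg (b.toNat + ·)
    (congrArg List.sum (List.attach_map_val (f := fun c : α × PreTree α => c.2.markCount)))

theorem unmark_node (b : Bool) (cs : List (α × PreTree α)) :
    unmark (node b cs) = node false (cs.map fun c => (c.1, unmark c.2)) := by
  rw [unmark]
  exact congrArg _ (List.attach_map_val (f := fun c : α × PreTree α => (c.1, unmark c.2)))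

theorem graft_node_true (S : PreTree α) (cs : List (α × PreTree α)) :
    graft S (node true cs) = node S.mark (cs ++ S.children) := by
  rw [graft]
  rfl

theorem graft_node_false (S : PreTree α) (cs : List (α × PreTree α)) :
    graft S (node false cs) = node false (cs.map fun c => (c.1, graft S c.2)) := by
  rw [graft, if_neg Bool.false_ne_true]
  exact congrArg _ (List.attach_map_val (f := fun c : α × PreTree α => (c.1, graft S c.2)))

theorem le_node_iff {b₁ b₂ : Bool} {c₁ c₂ : List (α × PreTree α)} :
    le (node b₁ c₁) (node b₂ c₂) ↔
      (b₂ = true → b₁ = true) ∧ ∀ q ∈ c₂, ∃ p ∈ c₁, p.1 = q.1 ∧ le p.2 q.2 := by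
  rw [le]

theorem eqv_node_iff {b₁ b₂ : Bool} {c₁ c₂ : List (α × PreTree α)} :
    eqv (node b₁ c₁) (node b₂ c₂) ↔
      b₁ = b₂ ∧ (∀ p ∈ c₁, ∃ q ∈ c₂, p.1 = q.1 ∧ eqv p.2 q.2) ∧
        ∀ q ∈ c₂, ∃ p ∈ c₁, p.1 = q.1 ∧ eqv p.2 q.2 := by
  rw [eqv]
  simp only [Subtype.exists, exists_prop]

open scoped Classical in
theorem reduce_node (b : Bool) (cs : List (α × PreTree α)) :
    reduce (node b cs) = node b ((cs.map fun c => (c.1, reduce c.2)).filter fun q =>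
      decide (∀ q' ∈ cs.map fun c => (c.1, reduce c.2),
        q'.1 = q.1 → le q'.2 q.2 → le q.2 q'.2)) := by
  rw [reduce, List.attach_map_val (f := fun c : α × PreTree α => (c.1, reduce c.2))]

end Basic

section Reduce

theorem le.refl (T : PreTree α) : T.le T := by
  induction T using induction_on with
  | node b cs ih => exact le_node_iff.2 ⟨id, fun q hq => ⟨q, hq, rfl, ih q hq⟩⟩

theorem le.trans {T₁ T₂ T₃ : PreTree α} (h₁₂ : T₁.le T₂) (h₂₃ : T₂.le T₃) : T₁.le T₃ := by
  induction T₃ using induction_on generalizing T₁ T₂ with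
  | node b₃ c₃ ih =>
    obtain ⟨b₁, c₁⟩ := T₁
    obtain ⟨b₂, c₂⟩ := T₂
    rw [le_node_iff] at *
    refine ⟨fun h => h₁₂.1 (h₂₃.1 h), fun q hq => ?_⟩
    obtain ⟨p, hp, hpq, hp_le⟩ := h₂₃.2 q hq
    obtain ⟨r, hr, hrp, hr_le⟩ := h₁₂.2 p hp
    exact ⟨r, hr, hrp.trans hpq, ih q hq hr_le hp_le⟩

theorem exists_minimal_le_of_mem {L : List (α × PreTree α)} {q : α × PreTree α} (hq : q ∈ L) :
    ∃ q' ∈ L, q'.1 = q.1 ∧ q'.2.le q.2 ∧ ∀ r ∈ L, r.1 = q'.1 → r.2.le q'.2 → q'.2.le r.2 := by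
  let _ : Preorder (PreTree α) := { le := le, le_refl := le.refl, le_trans _ _ _ := le.trans }
  have hfin : {t | (q.1, t) ∈ L}.Finite :=
    (L.finite_toSet.image Prod.snd).subset fun t ht => ⟨_, ht, rfl⟩
  obtain ⟨t, ht_le, ht_min⟩ := hfin.isPWO.exists_le_minimal (a := q.2) (by simpa using hq)
  refine ⟨(q.1, t), ht_min.prop, rfl, ht_le, fun r hr hr₁ hrt => ht_min.le_of_le ?_ hrt⟩
  obtain ⟨a, u⟩ := r
  simp only at hr₁
  simpa [hr₁] using hr

theorem mark_reduce (T : PreTree α) : (reduce T).mark = T.mark := by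
  obtain ⟨b, cs⟩ := T
  rw [reduce_node]
  rfl

theorem mem_children_reduce_iff {b : Bool} {cs : List (α × PreTree α)} {q : α × PreTree α} :
    q ∈ (reduce (node b cs)).children ↔
      q ∈ cs.map (fun c => (c.1, reduce c.2)) ∧
        ∀ q' ∈ cs.map fun c => (c.1, reduce c.2), q'.1 = q.1 → le q'.2 q.2 → le q.2 q'.2 := by
  rw [reduce_node]
  simp only [children, List.mem_filter, decide_eq_true_eq]

theorem exists_mem_children_reduce_le {b : Bool} {cs : List (α × PreTree α)}
    {c : α × PreTree α} (hc : c ∈ cs) :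
    ∃ q ∈ (reduce (node b cs)).children, q.1 = c.1 ∧ q.2.le (reduce c.2) := by
  obtain ⟨q, hq, hq₁, hq_le, hq_min⟩ :=
    exists_minimal_le_of_mem (List.mem_map_of_mem (f := fun c => (c.1, reduce c.2)) hc)
  exact ⟨q, mem_children_reduce_iff.2 ⟨hq, fun r hr hr₁ => hq_min r hr hr₁⟩,
    hq₁, hq_le⟩

theorem le_reduce (T : PreTree α) : T.le (reduce T) := by
  induction T using induction_on with
  | node b cs ih =>
    rcases hR : reduce (node b cs) with ⟨b', cs'⟩
    have hb : b' = b := by simpa [hR, mark] using mark_reduce (node b cs)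
    rw [le_node_iff]
    refine ⟨fun h => hb ▸ h, fun q hq => ?_⟩
    have hq' : q ∈ (reduce (node b cs)).children := by rwa [hR]
    obtain ⟨c, hc, rfl⟩ := List.mem_map.1 (mem_children_reduce_iff.1 hq').1
    exact ⟨c, hc, rfl, ih c hc⟩

theorem reduce_le (T : PreTree α) : (reduce T).le T := by
  induction T using induction_on with
  | node b cs ih =>
    rcases hR : reduce (node b cs) with ⟨b', cs'⟩
    have hb : b' = b := by simpa [hR, mark] using mark_reduce (node b cs)
    rw [le_node_iff]
    refine ⟨fun h => hb ▸ h, fun c hc => ?_⟩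
    obtain ⟨q, hq, hq₁, hq_le⟩ := exists_mem_children_reduce_le (b := b) hc
    rw [hR] at hq
    exact ⟨q, hq, hq₁, hq_le.trans (ih c hc)⟩

theorem reduced_node_of {b : Bool} {cs : List (α × PreTree α)} (hcs : ∀ c ∈ cs, Reduced c.2)
    (hmin : ∀ q ∈ cs, ∀ q' ∈ cs, q'.1 = q.1 → q'.2.le q.2 → q.2.le q'.2) :
    Reduced (node b cs) := by
  have hmap : (cs.map fun c => (c.1, reduce c.2)) = cs :=
    List.map_eq_self_of_forall_mem fun c hc => by rw [hcs c hc]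
  rw [Reduced, reduce_node, hmap, List.filter_eq_self.2 fun q hq => by simpa using hmin q hq]

theorem reduced_reduce (T : PreTree α) : Reduced (reduce T) := by
  induction T using induction_on with
  | node b cs ih =>
    rcases hR : reduce (node b cs) with ⟨b', cs'⟩
    have hmem : ∀ q ∈ cs', _ := fun q hq => mem_children_reduce_iff.1 (by rw [hR]; exact hq)
    refine reduced_node_of (fun q hq => ?_) fun q hq q' hq' => (hmem q hq).2 q' (hmem q' hq').1
    obtain ⟨c, hc, rfl⟩ := List.mem_map.1 (hmem q hq).1
    exact ih c hc

theorem reduced_node_iff {b : Bool} {cs : List (α × PreTree α)} :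
    Reduced (node b cs) ↔
      (∀ c ∈ cs, Reduced c.2) ∧ ∀ q ∈ cs, ∀ q' ∈ cs, q'.1 = q.1 → q'.2.le q.2 → q.2.le q'.2 := by
  refine ⟨fun h => ?_, fun h => reduced_node_of h.1 h.2⟩
  have hmem : ∀ q ∈ cs, _ := fun q hq => mem_children_reduce_iff.1 (by rw [h]; exact hq)
  refine ⟨fun q hq => ?_, fun q hq q' hq' => (hmem q hq).2 q' (hmem q' hq').1⟩
  obtain ⟨c, -, rfl⟩ := List.mem_map.1 (hmem q hq).1
  exact reduced_reduce c.2

theorem Reduced.of_subset {b b' : Bool} {cs ds : List (α × PreTree α)} (h : Reduced (node b cs))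
    (hsub : ds ⊆ cs) : Reduced (node b' ds) := by
  rw [reduced_node_iff] at h ⊢
  exact ⟨fun c hc => h.1 c (hsub hc), fun q hq q' hq' => h.2 q (hsub hq) q' (hsub hq')⟩

theorem reduced_node_singleton (b : Bool) (a : α) {t : PreTree α} (ht : Reduced t) :
    Reduced (node b [(a, t)]) :=
  reduced_node_of (by simpa using ht) (by simp [le.refl])

end Reduce

section Marks

theorem markCount_node_eq_zero_iff {b : Bool} {cs : List (α × PreTree α)} :
    markCount (node b cs) = 0 ↔ b = false ∧ ∀ c ∈ cs, markCount c.2 = 0 := by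
  rw [markCount_node, Nat.add_eq_zero_iff, List.sum_eq_zero_iff, List.forall_mem_map]
  cases b <;> simp

theorem markCount_node_true (cs : List (α × PreTree α)) :
    markCount (node true cs) = markCount (node false cs) + 1 := by
  simp only [markCount_node, Bool.toNat_true, Bool.toNat_false]
  omega

theorem unmark_eq_self {T : PreTree α} (hT : markCount T = 0) : unmark T = T := by
  induction T using induction_on with
  | node b cs ih =>
    obtain ⟨rfl, hcs⟩ := markCount_node_eq_zero_iff.1 hT
    rw [unmark_node, List.map_eq_self_of_forall_mem fun c hc => by rw [ih c hc (hcs c hc)]]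

theorem graft_eq_self (S : PreTree α) {T : PreTree α} (hT : markCount T = 0) : graft S T = T := by
  induction T using induction_on with
  | node b cs ih =>
    obtain ⟨rfl, hcs⟩ := markCount_node_eq_zero_iff.1 hT
    rw [graft_node_false, List.map_eq_self_of_forall_mem fun c hc => by rw [ih c hc (hcs c hc)]]

theorem node_false_children_unmark (T : PreTree α) : node false (unmark T).children = unmark T := by
  obtain ⟨b, cs⟩ := T
  rw [unmark_node]
  rfl

theorem markCount_unmark (T : PreTree α) : markCount (unmark T) = 0 := by
  induction T using induction_on with
  | node b cs ih =>
    rw [unmark_node, markCount_node_eq_zero_iff, List.forall_mem_map]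
    exact ⟨rfl, ih⟩

theorem markCount_graft (S : PreTree α) {T : PreTree α} (hT : markCount T ≤ 1) :
    markCount (graft S T) = markCount T * markCount S := by
  induction T using induction_on with
  | node b cs ih =>
    have hcs : ∀ c ∈ cs, b.toNat + markCount c.2 ≤ 1 := fun c hc => by
      have := List.le_sum_of_mem (List.mem_map_of_mem (f := fun c => markCount c.2) hc)
      rw [markCount_node] at hT
      omega
    cases b with
    | false =>
      rw [graft_node_false, markCount_node, markCount_node, List.map_map]
      simp only [Bool.toNat_false, zero_add, ← List.sum_map_mul_right]
      exact congrArg List.sum (List.map_congr_left fun c hc => ih c hc (by simpa using hcs c hc))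
    | true =>
      have h₀ : ∀ c ∈ cs, markCount c.2 = 0 := fun c hc => by
        have := hcs c hc
        simp only [Bool.toNat_true] at this
        omega
      obtain ⟨bS, dS⟩ := S
      rw [graft_node_true, markCount_node, markCount_node (b := true), markCount_node bS,
        List.map_append, List.sum_append, List.sum_eq_zero fun n hn => ?_]
      · simp [mark, children]
      · obtain ⟨c, hc, rfl⟩ := List.mem_map.1 hn
        exact h₀ c hc

theorem markCount_reduce_le (T : PreTree α) : markCount (reduce T) ≤ markCount T := by
  induction T using induction_on with
  | node b cs ih =>
    rw [reduce_node, markCount_node, markCount_node]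
    refine Nat.add_le_add_left ?_ _
    calc _ ≤ ((cs.map fun c => (c.1, reduce c.2)).map fun c => markCount c.2).sum :=
          ((List.filter_sublist).map _).sum_le_sum fun _ _ => Nat.zero_le _
      _ ≤ (cs.map fun c => markCount c.2).sum := by
          rw [List.map_map]
          exact List.sum_le_sum fun c hc => ih c hc

theorem markCount_eq_zero_of_le {S T : PreTree α} (h : S.le T) (hS : markCount S = 0) :
    markCount T = 0 := by
  induction T using induction_on generalizing S with
  | node b cs ih =>
    obtain ⟨bS, cS⟩ := S
    rw [le_node_iff] at h
    rw [markCount_node_eq_zero_iff] at hS ⊢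
    refine ⟨Bool.eq_false_iff.2 fun hb => Bool.eq_false_iff.1 hS.1 (h.1 hb), fun q hq => ?_⟩
    obtain ⟨p, hp, -, hp_le⟩ := h.2 q hq
    exact ih q hq hp_le (hS.2 p hp)

theorem pointed_reduce {T : PreTree α} (hT : markCount T = 1) : (reduce T).Pointed := by
  have h_le := markCount_reduce_le T
  have h_ne : markCount (reduce T) ≠ 0 := fun h => by
    simp [markCount_eq_zero_of_le (reduce_le T) h] at hT
  exact Nat.le_antisymm (hT ▸ h_le) (Nat.one_le_iff_ne_zero.2 h_ne)

theorem pointed_concat {T S : PreTree α} (hT : T.Pointed) (hS : S.Pointed) :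
    (concat T S).Pointed :=
  pointed_reduce (by rw [markCount_graft S hT.le, hT, hS])

theorem pointed_domTree (T : PreTree α) : (domTree T).Pointed := by
  refine pointed_reduce ?_
  rw [pointAtRoot, markCount_node_true, node_false_children_unmark, markCount_unmark]

end Marks

section Trivial

theorem eqv_refl (T : PreTree α) : eqv T T := by
  induction T using induction_on with
  | node b cs ih =>
    exact eqv_node_iff.2 ⟨rfl, fun p hp => ⟨p, hp, rfl, ih p hp⟩, fun q hq => ⟨q, hq, rfl, ih q hq⟩⟩

theorem eqv_node_of_subset {b : Bool} {cs ds : List (α × PreTree α)} (h₁ : cs ⊆ ds)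
    (h₂ : ds ⊆ cs) : eqv (node b cs) (node b ds) :=
  eqv_node_iff.2 ⟨rfl, fun p hp => ⟨p, h₁ hp, rfl, eqv_refl p.2⟩,
    fun q hq => ⟨q, h₂ hq, rfl, eqv_refl q.2⟩⟩

theorem eqv_trivialTree_iff {b : Bool} {cs : List (α × PreTree α)} :
    eqv (node b cs) trivialTree ↔ b = true ∧ cs = [] := by
  rw [trivialTree, eqv_node_iff, List.eq_nil_iff_forall_not_mem]
  simp

theorem not_eqv_trivialTree_of_ne_nil {b : Bool} {cs : List (α × PreTree α)}
    (h : cs ≠ []) : ¬ eqv (node b cs) trivialTree := by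
  simp [eqv_trivialTree_iff, h]

theorem children_ne_nil {T : PreTree α} (hP : T.Pointed) (hT : ¬ eqv T trivialTree) :
    T.children ≠ [] := by
  obtain ⟨b, cs⟩ := T
  rintro rfl
  cases b
  · simp [Pointed, markCount_node] at hP
  · exact hT (eqv_trivialTree_iff.2 ⟨rfl, rfl⟩)

theorem not_eqv_trivialTree_reduce {T : PreTree α} (hT : T.children ≠ []) :
    ¬ eqv (reduce T) trivialTree := by
  obtain ⟨b, cs⟩ := T
  change cs ≠ [] at hT
  obtain ⟨c, hc⟩ := List.exists_mem_of_ne_nil _ hT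
  obtain ⟨q, hq, -⟩ := exists_mem_children_reduce_le (b := b) hc
  rcases hR : reduce (node b cs) with ⟨b', cs'⟩
  rw [hR] at hq
  rw [eqv_trivialTree_iff]
  exact fun h => List.ne_nil_of_mem hq h.2

theorem not_eqv_trivialTree_concat {T : PreTree α} (hT : T.Pointed)
    (hT' : ¬ eqv T trivialTree) (S : PreTree α) : ¬ eqv (concat T S) trivialTree := by
  refine not_eqv_trivialTree_reduce ?_
  obtain ⟨b, cs⟩ := T
  have hcs : cs ≠ [] := children_ne_nil hT hT'
  cases b
  · simpa [graft_node_false, children] using hcs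
  · simp [graft_node_true, children, hcs]

theorem not_eqv_trivialTree_domTree {T : PreTree α} (hT : T.Pointed)
    (hT' : ¬ eqv T trivialTree) : ¬ eqv (domTree T) trivialTree := by
  refine not_eqv_trivialTree_reduce ?_
  obtain ⟨b, cs⟩ := T
  simpa [pointAtRoot, unmark_node, children] using children_ne_nil hT hT'

end Trivial

section Homomorphisms

theorem edge_node_nil_iff {b : Bool} {cs : List (α × PreTree α)} {a : α} {q : List ℕ} :
    Edge (node b cs) a [] q ↔ ∃ i t, cs[i]? = some (a, t) ∧ q = [i] := by
  simp [Edge, subAt, children]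

theorem edge_node_cons_iff {b : Bool} {cs : List (α × PreTree α)} {a : α} {i : ℕ}
    {p q : List ℕ} :
    Edge (node b cs) a (i :: p) q ↔ ∃ c, cs[i]? = some c ∧ ∃ q', Edge c.2 a p q' ∧ q = i :: q' := by
  simp only [Edge, subAt, Option.bind_eq_some_iff]
  constructor
  · rintro ⟨t, ⟨c, hc, ht⟩, j, u, hj, rfl⟩
    exact ⟨c, hc, p ++ [j], ⟨t, ht, j, u, hj, rfl⟩, rfl⟩
  · rintro ⟨c, hc, q', ⟨t, ht, j, u, hj, rfl⟩, rfl⟩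
    exact ⟨t, ⟨c, hc, ht⟩, j, u, hj, rfl⟩

theorem isPoint_node_nil_iff {b : Bool} {cs : List (α × PreTree α)} :
    IsPoint (node b cs) [] ↔ b = true := by
  simp [IsPoint, subAt, mark]

theorem isPoint_node_cons_iff {b : Bool} {cs : List (α × PreTree α)} {i : ℕ} {p : List ℕ} :
    IsPoint (node b cs) (i :: p) ↔ ∃ c, cs[i]? = some c ∧ IsPoint c.2 p := by
  simp only [IsPoint, subAt, Option.bind_eq_some_iff]
  exact ⟨fun ⟨t, ⟨c, hc, ht⟩, hm⟩ => ⟨c, hc, t, ht, hm⟩,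
    fun ⟨c, hc, t, ht, hm⟩ => ⟨t, ⟨c, hc, ht⟩, hm⟩⟩

theorem homInto_node {g : α → X → X → Prop} {b : Bool} {cs : List (α × PreTree α)} {x y : X} :
    HomInto (node b cs) g x y ↔
      (b = true → x = y) ∧ ∀ c ∈ cs, ∃ z, g c.1 x z ∧ HomInto c.2 g z y := by
  constructor
  · rintro ⟨θ, hθ_root, hθ_edge, hθ_point⟩
    refine ⟨fun hb => hθ_root ▸ hθ_point [] (isPoint_node_nil_iff.2 hb), fun c hc => ?_⟩
    obtain ⟨i, hi⟩ := List.mem_iff_getElem?.1 hc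
    refine ⟨θ [i], hθ_root ▸ hθ_edge c.1 [] [i] (edge_node_nil_iff.2 ⟨i, c.2, hi, rfl⟩),
      fun p => θ (i :: p), rfl, fun a p q h => ?_, fun p h => ?_⟩
    · exact hθ_edge a _ _ (edge_node_cons_iff.2 ⟨c, hi, q, h, rfl⟩)
    · exact hθ_point _ (isPoint_node_cons_iff.2 ⟨c, hi, h⟩)
  · rintro ⟨hb, hcs⟩
    have h_branch : ∀ i : ℕ, ∃ θ : List ℕ → X, ∀ c : α × PreTree α, cs[i]? = some c →
        g c.1 x (θ []) ∧ (∀ a p q, Edge c.2 a p q → g a (θ p) (θ q)) ∧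
          ∀ p, IsPoint c.2 p → θ p = y := by
      intro i
      cases hi : cs[i]? with
      | none => exact ⟨fun _ => x, by simp⟩
      | some c =>
        obtain ⟨z, hz, θ, hθ_root, hθ⟩ := hcs c (List.mem_of_getElem? hi)
        exact ⟨θ, fun c' hc' => Option.some_inj.1 hc' ▸ ⟨hθ_root ▸ hz, hθ⟩⟩
    choose θ hθ using h_branch
    refine ⟨fun | [] => x | i :: p => θ i p, rfl, ?_, ?_⟩
    · rintro a (_ | ⟨i, p⟩) q h
      · obtain ⟨i, t, hi, rfl⟩ := edge_node_nil_iff.1 h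
        exact (hθ i _ hi).1
      · obtain ⟨c, hi, q', h', rfl⟩ := edge_node_cons_iff.1 h
        exact (hθ i c hi).2.1 a p q' h'
    · rintro (_ | ⟨i, p⟩) h
      · exact hb (isPoint_node_nil_iff.1 h)
      · obtain ⟨c, hi, h'⟩ := isPoint_node_cons_iff.1 h
        exact (hθ i c hi).2.2 p h'

theorem homInto_node_true_iff {g : α → X → X → Prop} {cs : List (α × PreTree α)} {x y : X} :
    HomInto (node true cs) g x y ↔ x = y ∧ HomInto (node false cs) g x y := by
  simp [homInto_node]

theorem homInto_iff_of_markCount_eq_zero {g : α → X → X → Prop} {T : PreTree α}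
    (hT : markCount T = 0) {x y y' : X} : HomInto T g x y ↔ HomInto T g x y' := by
  induction T using induction_on generalizing x with
  | node b cs ih =>
    obtain ⟨rfl, hcs⟩ := markCount_node_eq_zero_iff.1 hT
    simp only [homInto_node, Bool.false_eq_true, false_implies, true_and]
    exact forall₂_congr fun c hc => exists_congr fun _ => and_congr_right fun _ =>
      ih c hc (hcs c hc)

theorem homInto_arrow (g : α → X → X → Prop) (a : α) : HomInto (arrow a) g = g a := by
  funext x y
  simp [arrow, homInto_node]

theorem homInto_mono {g : α → X → X → Prop} {S T : PreTree α} (h : S.le T) {x y : X}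
    (hS : HomInto S g x y) : HomInto T g x y := by
  induction T using induction_on generalizing S x with
  | node b cs ih =>
    obtain ⟨bS, cS⟩ := S
    rw [le_node_iff] at h
    rw [homInto_node] at hS ⊢
    refine ⟨fun hb => hS.1 (h.1 hb), fun q hq => ?_⟩
    obtain ⟨p, hp, hpq, hp_le⟩ := h.2 q hq
    obtain ⟨z, hz, hpz⟩ := hS.2 p hp
    exact ⟨z, hpq ▸ hz, ih q hq hp_le hpz⟩

theorem le_and_le_of_eqv {S T : PreTree α} (h : eqv S T) : S.le T ∧ T.le S := by
  induction T using induction_on generalizing S with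
  | node b cs ih =>
    obtain ⟨bS, cS⟩ := S
    obtain ⟨rfl, h₁, h₂⟩ := eqv_node_iff.1 h
    refine ⟨le_node_iff.2 ⟨id, fun q hq => ?_⟩, le_node_iff.2 ⟨id, fun p hp => ?_⟩⟩
    · obtain ⟨p, hp, hpq, hpq'⟩ := h₂ q hq
      exact ⟨p, hp, hpq, (ih q hq hpq').1⟩
    · obtain ⟨q, hq, hpq, hpq'⟩ := h₁ p hp
      exact ⟨q, hq, hpq.symm, (ih q hq hpq').2⟩

theorem homInto_eq_of_eqv (g : α → X → X → Prop) {S T : PreTree α} (h : eqv S T) :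
    HomInto S g = HomInto T g := by
  funext x y
  exact propext ⟨homInto_mono (le_and_le_of_eqv h).1, homInto_mono (le_and_le_of_eqv h).2⟩

theorem homInto_reduce (g : α → X → X → Prop) (T : PreTree α) :
    HomInto (reduce T) g = HomInto T g := by
  funext x y
  exact propext ⟨homInto_mono (reduce_le T), homInto_mono (le_reduce T)⟩

/-- The common step of `graft` and `unmark`, which only act on the branch containing the point. -/
theorem homInto_node_false_map_iff {g : α → X → X → Prop} {F : PreTree α → PreTree α}
    {R : X → X → Prop} {cs : List (α × PreTree α)} {x y : X}
    (hF : ∀ t, markCount t = 0 → F t = t) (hcs : markCount (node false cs) = 1)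
    (hc : ∀ c ∈ cs, markCount c.2 = 1 →
      ∀ w, HomInto (F c.2) g w y ↔ ∃ z, HomInto c.2 g w z ∧ R z y) :
    HomInto (node false (cs.map fun c => (c.1, F c.2))) g x y ↔
      ∃ z, HomInto (node false cs) g x z ∧ R z y := by
  obtain ⟨c, hc_mem, hc_one, hothers⟩ :=
    List.exists_eq_one_of_sum_map_eq_one (by simpa [markCount_node] using hcs)
  simp only [homInto_node, Bool.false_eq_true, false_implies, true_and, List.forall_mem_map]
  constructor
  · intro h
    obtain ⟨w, hw, hFw⟩ := h c hc_mem
    obtain ⟨z, hz, hRz⟩ := (hc c hc_mem hc_one w).1 hFw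
    refine ⟨z, fun d hd => ?_, hRz⟩
    rcases hothers d hd with h0 | rfl
    · obtain ⟨w', hw', hd'⟩ := h d hd
      rw [hF _ h0] at hd'
      exact ⟨w', hw', (homInto_iff_of_markCount_eq_zero h0).1 hd'⟩
    · exact ⟨w, hw, hz⟩
  · rintro ⟨z, h, hRz⟩ d hd
    obtain ⟨w, hw, hd'⟩ := h d hd
    refine ⟨w, hw, ?_⟩
    rcases hothers d hd with h0 | rfl
    · rw [hF _ h0]
      exact (homInto_iff_of_markCount_eq_zero h0).1 hd'
    · exact (hc d hd hc_one w).2 ⟨z, hd', hRz⟩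

theorem homInto_graft_iff {g : α → X → X → Prop} (S : PreTree α) {T : PreTree α}
    (hT : markCount T = 1) {x y : X} :
    HomInto (graft S T) g x y ↔ ∃ z, HomInto T g x z ∧ HomInto S g z y := by
  induction T using induction_on generalizing x with
  | node b cs ih =>
    cases b with
    | false =>
      rw [graft_node_false]
      exact homInto_node_false_map_iff (fun t => graft_eq_self S) hT fun c hc hc₁ w => ih c hc hc₁
    | true =>
      obtain ⟨bS, dS⟩ := S
      have h₀ : markCount (node false cs) = 0 := by
        rw [markCount_node_true] at hT
        omega
      rw [graft_node_true]
      simp only [mark, children, homInto_node_true_iff, and_assoc, exists_eq_left',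
        homInto_iff_of_markCount_eq_zero h₀ (y := x) (y' := y)]
      simp only [homInto_node, List.mem_append, or_imp, forall_and, Bool.false_eq_true,
        false_implies, true_and]
      tauto

theorem homInto_unmark_iff {g : α → X → X → Prop} {T : PreTree α} (hT : markCount T = 1)
    {x y : X} : HomInto (unmark T) g x y ↔ ∃ z, HomInto T g x z := by
  induction T using induction_on generalizing x with
  | node b cs ih =>
    rw [unmark_node]
    cases b with
    | false =>
      simpa using homInto_node_false_map_iff (R := fun _ _ => True) (fun t => unmark_eq_self) hT
        fun c hc hc₁ w => by simpa using ih c hc hc₁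
    | true =>
      have h₀ : markCount (node false cs) = 0 := by
        rw [markCount_node_true] at hT
        omega
      rw [List.map_eq_self_of_forall_mem fun c hc => by
        rw [unmark_eq_self ((markCount_node_eq_zero_iff.1 h₀).2 c hc)]]
      simp only [homInto_node_true_iff, exists_eq_left']
      exact homInto_iff_of_markCount_eq_zero h₀

theorem homInto_concat (g : α → X → X → Prop) {T : PreTree α} (hT : T.Pointed) (S : PreTree α) :
    HomInto (concat T S) g = FreeKAD.relComp (HomInto T g) (HomInto S g) := by
  funext x y
  rw [concat, homInto_reduce]
  exact propext (homInto_graft_iff S hT)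

theorem homInto_domTree (g : α → X → X → Prop) {T : PreTree α} (hT : T.Pointed) :
    HomInto (domTree T) g = FreeKAD.relDom (HomInto T g) := by
  funext x y
  rw [domTree, homInto_reduce, pointAtRoot, homInto_node_true_iff, node_false_children_unmark,
    homInto_unmark_iff hT]
  rfl

end Homomorphisms

section Decomposition

theorem concat_node_true_singleton {b : Bool} {c : α × PreTree α} {cs : List (α × PreTree α)}
    (h : Reduced (node b (c :: cs))) : concat (node true [c]) (node b cs) = node b (c :: cs) := by
  rw [concat, graft_node_true]
  exact h

theorem concat_arrow {a : α} {t : PreTree α} (h : Reduced (node false [(a, t)])) :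
    concat (arrow a) t = node false [(a, t)] := by
  obtain ⟨bt, dt⟩ := t
  rw [concat, arrow, graft_node_false, List.map_singleton, graft_node_true]
  exact h

theorem domTree_node_false_singleton {a : α} {ds : List (α × PreTree α)}
    (hds : markCount (node false ds) = 0) (h : Reduced (node true [(a, node false ds)])) :
    domTree (node false [(a, node true ds)]) = node true [(a, node false ds)] := by
  rw [domTree, pointAtRoot, unmark_node, List.map_singleton, unmark_node, ← unmark_node false,
    unmark_eq_self hds]
  exact h

/-- `sizeOf` ignores the marks; counting the root mark makes `D(T)` heavier than `T`
when both have the same shape. -/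
noncomputable def weight (T : PreTree α) : ℕ := 2 * sizeOf T + T.mark.toNat

end Decomposition

end PreTree

namespace FreeKAD

open PreTree

variable {α : Type}

def Decomposable (U : PreTree α) : Prop :=
  (∃ a, eqv U (arrow a)) ∨
    (∃ T S : NRPTree α, weight T.1 < weight U ∧ weight S.1 < weight U ∧ eqv U (concat T.1 S.1)) ∨
    ∃ T : NRPTree α, weight T.1 < weight U ∧ eqv U (domTree T.1)

theorem exists_concat_eq_node_cons_cons {b : Bool} {c d : α × PreTree α}
    {cs : List (α × PreTree α)} (hR : Reduced (node b (c :: d :: cs)))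
    (hP : markCount (node b (c :: d :: cs)) = 1) (hc : markCount c.2 = 0) :
    ∃ T S : NRPTree α, weight T.1 < weight (node b (c :: d :: cs)) ∧
      weight S.1 < weight (node b (c :: d :: cs)) ∧ concat T.1 S.1 = node b (c :: d :: cs) := by
  refine ⟨⟨node true [c], hR.of_subset (by simp), ?_, not_eqv_trivialTree_of_ne_nil (by simp)⟩,
    ⟨node b (d :: cs), hR.of_subset (by simp), ?_, not_eqv_trivialTree_of_ne_nil (by simp)⟩,
    ?_, ?_, concat_node_true_singleton hR⟩
  · simp [PreTree.Pointed, markCount_node, hc]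
  · simpa [PreTree.Pointed, markCount_node, hc] using hP
  · obtain ⟨a, t⟩ := d
    simp [weight, mark]
    omega
  · obtain ⟨a, t⟩ := c
    simp [weight, mark]

theorem decomposable_node_cons_cons {b : Bool} {c d : α × PreTree α}
    {cs : List (α × PreTree α)} (hR : Reduced (node b (c :: d :: cs)))
    (hP : markCount (node b (c :: d :: cs)) = 1) : Decomposable (node b (c :: d :: cs)) := by
  refine Or.inr (Or.inl ?_)
  by_cases hc : markCount c.2 = 0
  · obtain ⟨T, S, hT, hS, h⟩ := exists_concat_eq_node_cons_cons hR hP hc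
    exact ⟨T, S, hT, hS, h ▸ eqv_refl _⟩
  · have hd : markCount d.2 = 0 := by
      rw [markCount_node] at hP
      simp only [List.map_cons, List.sum_cons] at hP
      omega
    have h_weight : weight (node b (d :: c :: cs)) = weight (node b (c :: d :: cs)) := by
      simp [weight, mark]
      omega
    have h_swap := List.Perm.swap c d cs
    have hP' : markCount (node b (d :: c :: cs)) = 1 := by
      rw [markCount_node] at hP ⊢
      simp only [List.map_cons, List.sum_cons] at hP ⊢
      omega
    obtain ⟨T, S, hT, hS, h⟩ :=
      exists_concat_eq_node_cons_cons (hR.of_subset h_swap.subset) hP' hd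
    exact ⟨T, S, h_weight ▸ hT, h_weight ▸ hS,
      h ▸ eqv_node_of_subset h_swap.symm.subset h_swap.subset⟩

theorem decomposable_node_true_singleton {a : α} {u : PreTree α}
    (hR : Reduced (node true [(a, u)])) (hP : markCount (node true [(a, u)]) = 1) :
    Decomposable (node true [(a, u)]) := by
  obtain ⟨bu, ds⟩ := u
  have hu : markCount (node bu ds) = 0 := by
    rw [markCount_node_true, markCount_node] at hP
    simpa using hP
  obtain ⟨rfl, -⟩ := markCount_node_eq_zero_iff.1 hu
  have hds : Reduced (node true ds) :=
    ((reduced_node_iff.1 hR).1 _ (List.mem_singleton_self _)).of_subset (List.Subset.refl _)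
  refine Or.inr (Or.inr ⟨⟨node false [(a, node true ds)], reduced_node_singleton _ _ hds, ?_,
    not_eqv_trivialTree_of_ne_nil (by simp)⟩, by simp [weight, mark], ?_⟩)
  · rw [PreTree.Pointed, markCount_node]
    simp [markCount_node_true, hu]
  · rw [domTree_node_false_singleton hu hR]
    exact eqv_refl _

theorem decomposable_node_false_singleton {a : α} {t : PreTree α}
    (hR : Reduced (node false [(a, t)])) (hP : markCount (node false [(a, t)]) = 1) :
    Decomposable (node false [(a, t)]) := by
  have ht : markCount t = 1 := by
    rw [markCount_node] at hP
    simpa using hP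
  obtain ⟨bt, dt⟩ := t
  cases dt with
  | nil =>
    obtain rfl : bt = true := by simpa [markCount_node] using ht
    exact Or.inl ⟨a, eqv_refl _⟩
  | cons e es =>
    have hA : Reduced (arrow a) := reduced_node_singleton _ _ (reduced_node_of (by simp) (by simp))
    refine Or.inr (Or.inl ⟨⟨arrow a, hA, by simp [arrow, PreTree.Pointed, markCount_node],
      not_eqv_trivialTree_of_ne_nil (by simp)⟩, ⟨node bt (e :: es),
      (reduced_node_iff.1 hR).1 _ (List.mem_singleton_self _), ht,
      not_eqv_trivialTree_of_ne_nil (by simp)⟩, ?_, ?_, ?_⟩)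
    · obtain ⟨ea, et⟩ := e
      simp [weight, arrow, mark]
      omega
    · have := Bool.toNat_le bt
      simp [weight, mark]
      omega
    · rw [concat_arrow hR]
      exact eqv_refl _

theorem NRPTree.decomposable (U : NRPTree α) : Decomposable U.1 := by
  obtain ⟨⟨b, cs⟩, hR, hP, hN⟩ := U
  match cs, b with
  | [], _ => exact absurd rfl (children_ne_nil hP hN)
  | [(_, _)], true => exact decomposable_node_true_singleton hR hP
  | [(_, _)], false => exact decomposable_node_false_singleton hR hP
  | _ :: _ :: _, _ => exact decomposable_node_cons_cons hR hP

theorem NRPTree.induction_on {motive : NRPTree α → Prop} (U : NRPTree α)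
    (harrow : ∀ a (U : NRPTree α), eqv U.1 (arrow a) → motive U)
    (hconcat : ∀ T S U : NRPTree α, eqv U.1 (concat T.1 S.1) → motive T → motive S → motive U)
    (hdom : ∀ T U : NRPTree α, eqv U.1 (domTree T.1) → motive T → motive U) : motive U := by
  induction h : weight U.1 using Nat.strong_induction_on generalizing U with
  | _ n ih =>
    rcases U.decomposable with ⟨a, hU⟩ | ⟨T, S, hT, hS, hU⟩ | ⟨T, hT, hU⟩
    · exact harrow a U hU
    · exact hconcat T S U hU (ih _ (h ▸ hT) T rfl) (ih _ (h ▸ hS) S rfl)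
    · exact hdom T U hU (ih _ (h ▸ hT) T rfl)

/-- The reduced pointed `Σ`-labelled rooted trees other
than the trivial tree are closed under pointed tree concatenation and
domain, and form the free algebra over `Σ` for the class of
`{∘, D}`-algebras of binary relations.  (Trees are compared with `eqv`,
equality of trees whose children collections are sets.) -/
theorem free_algebra_comp_dom {α : Type} :
    (∀ T S : PreTree α,
        (T.Reduced ∧ T.Pointed ∧ ¬ eqv T trivialTree) →
        (S.Reduced ∧ S.Pointed ∧ ¬ eqv S trivialTree) →
        ((concat T S).Reduced ∧ (concat T S).Pointed ∧
          ¬ eqv (concat T S) trivialTree)) ∧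
    (∀ T : PreTree α,
        (T.Reduced ∧ T.Pointed ∧ ¬ eqv T trivialTree) →
        ((domTree T).Reduced ∧ (domTree T).Pointed ∧
          ¬ eqv (domTree T) trivialTree)) ∧
    (∀ (X : Type) (A : Set (X → X → Prop)),
      (∀ R ∈ A, ∀ S ∈ A, relComp R S ∈ A) →
      (∀ R ∈ A, relDom R ∈ A) →
      ∀ g : α → X → X → Prop, (∀ a, g a ∈ A) →
      ∃! h : NRPTree α → (X → X → Prop),
        (∀ T, h T ∈ A) ∧
        (∀ (a : α) (U : NRPTree α), eqv U.1 (arrow a) → h U = g a) ∧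
        (∀ T S U : NRPTree α, eqv U.1 (concat T.1 S.1) →
            h U = relComp (h T) (h S)) ∧
        (∀ T U : NRPTree α, eqv U.1 (domTree T.1) → h U = relDom (h T))) := by
  refine ⟨fun T S hT hS => ⟨reduced_reduce _, pointed_concat hT.2.1 hS.2.1,
      not_eqv_trivialTree_concat hT.2.1 hT.2.2 S⟩,
    fun T hT => ⟨reduced_reduce _, pointed_domTree T, not_eqv_trivialTree_domTree hT.2.1 hT.2.2⟩,
    fun X A hA_comp hA_dom g hg => ?_⟩
  have h_arrow (a : α) (U : NRPTree α) (hU : eqv U.1 (arrow a)) : HomInto U.1 g = g a :=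
    (homInto_eq_of_eqv g hU).trans (homInto_arrow g a)
  have h_concat (T S U : NRPTree α) (hU : eqv U.1 (concat T.1 S.1)) :
      HomInto U.1 g = relComp (HomInto T.1 g) (HomInto S.1 g) :=
    (homInto_eq_of_eqv g hU).trans (homInto_concat g T.2.2.1 S.1)
  have h_dom (T U : NRPTree α) (hU : eqv U.1 (domTree T.1)) :
      HomInto U.1 g = relDom (HomInto T.1 g) :=
    (homInto_eq_of_eqv g hU).trans (homInto_domTree g T.2.2.1)
  refine ⟨fun U => HomInto U.1 g, ⟨fun U => show HomInto U.1 g ∈ A from ?_, h_arrow, h_concat,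
    h_dom⟩, ?_⟩
  · induction U using NRPTree.induction_on with
    | harrow a U hU => exact h_arrow a U hU ▸ hg a
    | hconcat T S U hU hT hS => exact h_concat T S U hU ▸ hA_comp _ hT _ hS
    | hdom T U hU hT => exact h_dom T U hU ▸ hA_dom _ hT
  · rintro h ⟨-, h_arrow', h_concat', h_dom'⟩
    funext U
    induction U using NRPTree.induction_on with
    | harrow a U hU => rw [h_arrow' a U hU, h_arrow a U hU]
    | hconcat T S U hU hT hS => rw [h_concat' T S U hU, h_concat T S U hU, hT, hS]
    | hdom T U hU hT => rw [h_dom' T U hU, h_dom T U hU, hT]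

end FreeKAD
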